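/- Almost contractive recursion for approximate DSPI: let ε ≥ 0 and let (π_k, W_k*, W̄_k) be an approximate DSPI sequence with stepsizes β_0 = 1 and β_k = β ∈ (0,1] for all k ≥ 1. Then for every k ≥ 1, ‖Q* − W̄_{k+1}‖∞ ≤ (1 − β(1−γ)) ‖Q* − W̄_k‖∞ + β γ ν_max η_{k−1} + β γ δ_k + β ε, where η_{k−1} = τ(1−β)^{k−1} and δ_k = ((1+γ)/(1−γ)) · ε · Σ_{i=0}^{k−1} (1−β)^i. -/

import Mathlib

open Finset

noncomputable section

/-- A finite discounted MDP: transition kernel `p`, reward `R` in `[0,1]`,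
discount factor `γ ∈ (0,1)`. -/
structure MDP (S A : Type*) [Fintype S] [Fintype A] where
  p : S → A → S → ℝ
  R : S → A → ℝ
  γ : ℝ
  hp : ∀ s a, p s a ∈ stdSimplex ℝ S
  hR : ∀ s a, R s a ∈ Set.Icc (0 : ℝ) 1
  hγ : γ ∈ Set.Ioo (0 : ℝ) 1

variable {S A : Type*} [Fintype S] [Fintype A] [Nonempty S] [Nonempty A]

/-- The Bellman operator `H^π` of a policy `pol`. -/
def bellmanPol (M : MDP S A) (pol : S → A → ℝ) (Q : S → A → ℝ) : S → A → ℝ :=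
  fun s a => M.R s a + M.γ * ∑ s', M.p s a s' * ∑ a', pol s' a' * Q s' a'

/-- The Bellman optimality operator `H`. -/
def bellmanOpt (M : MDP S A) (Q : S → A → ℝ) : S → A → ℝ :=
  fun s a => M.R s a + M.γ * ∑ s', M.p s a s' * (⨆ a', Q s' a')

/-- The sup-norm of a vector in `ℝ^{S×A}`. -/
def supNormQ (Q : S → A → ℝ) : ℝ := ⨆ x : S × A, |Q x.1 x.2|

/-- The sup-norm of a vector in `ℝ^S`. -/
def supNormV (V : S → ℝ) : ℝ := ⨆ s : S, |V s|

/-- The value function `V^π` of a policy `pol` with `Q`-function `Qpol`. -/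
def valueOf (pol : S → A → ℝ) (Qpol : S → A → ℝ) : S → ℝ := fun s => ∑ a, pol s a * Qpol s a

/-- The optimal value function `V*` derived from `Q*`. -/
def Vstar (Qstar : S → A → ℝ) : S → ℝ := fun s => ⨆ a, Qstar s a

/-- The smoothed Bellman optimality operator `H_η`. -/
def smoothedOpt (M : MDP S A) (ν : (A → ℝ) → ℝ) (η : ℝ) (Q : S → A → ℝ) : S → A → ℝ :=
  fun s a => M.R s a + M.γ * ∑ s', M.p s a s' *
    (⨆ μ : stdSimplex ℝ A, (∑ a', μ.1 a' * Q s' a' + η * ν μ.1))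

/-- The smoothed Bellman operator `H_η^π` of a policy `pol`. -/
def smoothedPol (M : MDP S A) (ν : (A → ℝ) → ℝ) (η : ℝ) (pol : S → A → ℝ)
    (Q : S → A → ℝ) : S → A → ℝ :=
  fun s a => M.R s a + M.γ * ∑ s', M.p s a s' * (∑ a', pol s' a' * Q s' a' + η * ν (pol s'))

/-- `ν_max := max_{μ ∈ Δ(A)} ν(μ)`. -/
def nuMax (ν : (A → ℝ) → ℝ) : ℝ := sSup (ν '' stdSimplex ℝ A)

/-- `η_k = τ ∏_{j=1}^k (1 - β_j)`. -/
def eta (τ : ℝ) (β : ℕ → ℝ) (k : ℕ) : ℝ := τ * ∏ j ∈ Finset.Icc 1 k, (1 - β j)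

/-- An approximate DSPI sequence: `W k` approximates `Q^{π_k}` within `ε` in sup-norm,
and `Wbar k` is the running average used for the regularized greedy step. -/
structure ApproxDSPISeq (M : MDP S A) (ν : (A → ℝ) → ℝ) (τ : ℝ) (β : ℕ → ℝ) (ε : ℝ) where
  pol : ℕ → S → A → ℝ
  Qpi : ℕ → S → A → ℝ
  W : ℕ → S → A → ℝ
  Wbar : ℕ → S → A → ℝ
  hpol : ∀ k s, pol k s ∈ stdSimplex ℝ A
  hQpi : ∀ k, bellmanPol M (pol k) (Qpi k) = Qpi k
  hW : ∀ k, supNormQ (W k - Qpi k) ≤ ε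
  hpol0 : ∀ s, ∀ μ ∈ stdSimplex ℝ A, ν μ ≤ ν (pol 0 s)
  hWbar0 : Wbar 0 = 0
  hWbarSucc : ∀ k, Wbar (k + 1) = (1 - β k) • Wbar k + β k • W k
  hgreedy : ∀ k, smoothedPol M ν (eta τ β k) (pol (k + 1)) (Wbar (k + 1))
      = smoothedOpt M ν (eta τ β k) (Wbar (k + 1))

/-
Write `Q* - W̄ₖ₊₁ = (1 - β)(Q* - W̄ₖ) + β(Q* - Q^{πₖ}) + β(Q^{πₖ} - Wₖ*)`. The middle term is
nonnegative and, after one Bellman backup, at most `γ (‖Q* - W̄ₖ‖ + ηₖ₋₁ ν_max + δₖ)`: the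
regularized greedy policy `πₖ` loses at most `ηₖ₋₁ ν_max` against `maxₐ W̄ₖ`, and
`W̄ₖ ≤ Q^{πₖ} + δₖ`. That overestimate follows by induction from the approximate improvement
`Q^{πₖ₊₁} ≥ Q^{πₖ} - 2γε/(1-γ)`, itself a consequence of `πₖ ⬝ Wₖ* ≤ πₖ₊₁ ⬝ Wₖ*`: since `W̄` is a
running average and `η` decays geometrically at the same rate, the regularized greedy conditions
at two consecutive steps combine to cancel everything but the newest estimate `Wₖ*`.
The greedy equation `H_η^{π}(W̄) = H_η(W̄)` only pins `π` down at states reached with positive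
probability, which suffices since `π` only enters through such backups.
-/
section

variable {ι : Type*} [Fintype ι] {w f g : ι → ℝ} {c : ℝ}

lemma dotProduct_le_of_mem_stdSimplex (hw : w ∈ stdSimplex ℝ ι) (h : ∀ i, w i ≠ 0 → f i ≤ c) :
    w ⬝ᵥ f ≤ c :=
  calc w ⬝ᵥ f ≤ ∑ i, w i * c := sum_le_sum fun i _ => by
        rcases eq_or_ne (w i) 0 with hi | hi
        · simp [hi]
        · exact mul_le_mul_of_nonneg_left (h i hi) (hw.1 i)
    _ = c := by rw [← sum_mul, hw.2, one_mul]

lemma le_dotProduct_of_mem_stdSimplex (hw : w ∈ stdSimplex ℝ ι) (h : ∀ i, w i ≠ 0 → c ≤ f i) :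
    c ≤ w ⬝ᵥ f := by
  have := dotProduct_le_of_mem_stdSimplex hw (f := -f) (c := -c) fun i hi => neg_le_neg (h i hi)
  rwa [dotProduct_neg, neg_le_neg_iff] at this

lemma abs_dotProduct_sub_le_of_mem_stdSimplex (hw : w ∈ stdSimplex ℝ ι)
    (h : ∀ i, |f i - g i| ≤ c) : |w ⬝ᵥ f - w ⬝ᵥ g| ≤ c := by
  rw [← dotProduct_sub, abs_le]
  exact ⟨le_dotProduct_of_mem_stdSimplex hw fun i _ => (abs_le.1 (h i)).1,
    dotProduct_le_of_mem_stdSimplex hw fun i _ => (abs_le.1 (h i)).2⟩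

lemma dotProduct_le_iSup_of_mem_stdSimplex (hw : w ∈ stdSimplex ℝ ι) : w ⬝ᵥ f ≤ ⨆ i, f i :=
  dotProduct_le_of_mem_stdSimplex hw fun i _ => le_ciSup (Set.finite_range f).bddAbove i

lemma eq_of_dotProduct_eq_of_le (hw : ∀ i, 0 ≤ w i) (hfg : ∀ i, f i ≤ g i)
    (h : w ⬝ᵥ f = w ⬝ᵥ g) {i : ι} (hi : w i ≠ 0) : f i = g i := by
  have hsum : ∑ j, w j * (g j - f j) = 0 := by
    rw [← sub_eq_zero.2 h.symm, ← dotProduct_sub]; rfl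
  have := (sum_eq_zero_iff_of_nonneg fun j _ => mul_nonneg (hw j) (sub_nonneg.2 (hfg j))).1
    hsum i (mem_univ i)
  linarith [(mul_eq_zero.1 this).resolve_left hi]

end

/-- Minimum principle: at a minimizer of `Δ`, `h` gives `m ≥ γ (m - c)` for `m = min Δ`. -/
lemma neg_div_le_of_lowerBound_contracts {X : Type*} [Finite X] {Δ : X → ℝ} {γ c : ℝ}
    (hγ : γ < 1) (h : ∀ m, (∀ x, m ≤ Δ x) → ∀ x, γ * (m - c) ≤ Δ x) (x : X) :
    -(γ * c / (1 - γ)) ≤ Δ x := by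
  have : Nonempty X := ⟨x⟩
  obtain ⟨x₀, hx₀⟩ := Finite.exists_min Δ
  have hmin := h (Δ x₀) hx₀ x₀
  have : -(γ * c / (1 - γ)) ≤ Δ x₀ := by
    rw [← neg_div, div_le_iff₀ (by linarith)]
    nlinarith
  exact this.trans (hx₀ x)

section

variable {S A : Type*}

lemma supNormQ_nonneg (Q : S → A → ℝ) : 0 ≤ supNormQ Q :=
  Real.iSup_nonneg fun _ => abs_nonneg _

lemma supNormQ_le [Nonempty S] [Nonempty A] {Q : S → A → ℝ} {c : ℝ} (h : ∀ s a, |Q s a| ≤ c) :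
    supNormQ Q ≤ c :=
  ciSup_le fun x => h x.1 x.2

variable [Fintype S] [Fintype A]

lemma abs_le_supNormQ (Q : S → A → ℝ) (s : S) (a : A) : |Q s a| ≤ supNormQ Q :=
  le_ciSup (f := fun x : S × A => |Q x.1 x.2|) (Set.finite_range _).bddAbove (s, a)

lemma le_nuMax {ν : (A → ℝ) → ℝ} (hν : ContinuousOn ν (stdSimplex ℝ A)) {μ : A → ℝ}
    (hμ : μ ∈ stdSimplex ℝ A) : ν μ ≤ nuMax ν :=
  le_csSup ((isCompact_stdSimplex ℝ A).bddAbove_image hν) ⟨μ, hμ, rfl⟩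

lemma nuMax_nonneg {ν : (A → ℝ) → ℝ} (hν : ∀ μ ∈ stdSimplex ℝ A, 0 ≤ ν μ) : 0 ≤ nuMax ν :=
  Real.sSup_nonneg fun _ ⟨μ, hμ, hμν⟩ => hμν ▸ hν μ hμ

lemma eta_eq_mul_pow {τ b : ℝ} {β : ℕ → ℝ} (hβ : ∀ k ≥ 1, β k = b) (k : ℕ) :
    eta τ β k = τ * (1 - b) ^ k := by
  rw [eta, prod_congr rfl fun j hj => by rw [hβ j (mem_Icc.1 hj).1], prod_const, Nat.card_Icc,
    Nat.add_sub_cancel]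

lemma eta_nonneg {τ b : ℝ} {β : ℕ → ℝ} (hτ : 0 ≤ τ) (hb : b ≤ 1) (hβ : ∀ k ≥ 1, β k = b)
    (k : ℕ) : 0 ≤ eta τ β k :=
  eta_eq_mul_pow hβ k ▸ mul_nonneg hτ (pow_nonneg (sub_nonneg.2 hb) k)

def IsSmoothedGreedy (ν : (A → ℝ) → ℝ) (η : ℝ) (q μ₀ : A → ℝ) : Prop :=
  ∀ μ ∈ stdSimplex ℝ A, μ ⬝ᵥ q + η * ν μ ≤ μ₀ ⬝ᵥ q + η * ν μ₀

namespace IsSmoothedGreedy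

variable {ν : (A → ℝ) → ℝ} {η : ℝ} {q w μ₀ μ₁ : A → ℝ}

lemma iSup_le [Nonempty A] (h : IsSmoothedGreedy ν η q μ₀) (hη : 0 ≤ η)
    (hν : ∀ μ ∈ stdSimplex ℝ A, 0 ≤ ν μ) {C : ℝ} (hC : ν μ₀ ≤ C) :
    ⨆ a, q a ≤ μ₀ ⬝ᵥ q + η * C := by
  classical
  refine ciSup_le fun a => ?_
  have hsingle := h _ (single_mem_stdSimplex ℝ a)
  rw [single_dotProduct, one_mul] at hsingle
  nlinarith [mul_nonneg hη (hν _ (single_mem_stdSimplex ℝ a)), mul_le_mul_of_nonneg_left hC hη]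

lemma dotProduct_le_of_nu_le (h : IsSmoothedGreedy ν η w μ₁) (hη : 0 ≤ η)
    (hμ₀ : μ₀ ∈ stdSimplex ℝ A) (hν : ν μ₁ ≤ ν μ₀) : μ₀ ⬝ᵥ w ≤ μ₁ ⬝ᵥ w := by
  nlinarith [h μ₀ hμ₀, mul_le_mul_of_nonneg_left hν hη]

/-- Dual averaging: `(1 - b)` times the optimality of `μ₀` plus the optimality of `μ₁` cancels
both the `q`-terms and the `ν`-terms, leaving `b (μ₀ - μ₁) ⬝ᵥ w ≤ 0`. -/
lemma dotProduct_le_of_average {b : ℝ} (hb₀ : 0 < b) (hb₁ : b ≤ 1)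
    (h₀ : IsSmoothedGreedy ν η q μ₀)
    (h₁ : IsSmoothedGreedy ν ((1 - b) * η) ((1 - b) • q + b • w) μ₁)
    (hμ₀ : μ₀ ∈ stdSimplex ℝ A) (hμ₁ : μ₁ ∈ stdSimplex ℝ A) : μ₀ ⬝ᵥ w ≤ μ₁ ⬝ᵥ w := by
  have h₀₁ := mul_le_mul_of_nonneg_left (h₀ μ₁ hμ₁) (sub_nonneg.2 hb₁)
  have h₁₀ := h₁ μ₀ hμ₀
  simp only [dotProduct_add, dotProduct_smul, smul_eq_mul] at h₁₀
  exact le_of_mul_le_mul_left (by linarith) hb₀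

end IsSmoothedGreedy

namespace MDP

variable (M : MDP S A)

def backup (V : S → ℝ) : S → A → ℝ := fun s a => M.R s a + M.γ * M.p s a ⬝ᵥ V

lemma bellmanPol_eq_backup (π Q : S → A → ℝ) :
    bellmanPol M π Q = M.backup (valueOf π Q) := rfl

lemma bellmanOpt_eq_backup (Q : S → A → ℝ) : bellmanOpt M Q = M.backup (Vstar Q) := rfl

variable {M}

lemma backup_sub_backup (V V' : S → ℝ) (s : S) (a : A) :
    M.backup V s a - M.backup V' s a = M.γ * M.p s a ⬝ᵥ (V - V') := by
  rw [backup, backup, dotProduct_sub]; ring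

lemma backup_sub_backup_le {V V' : S → ℝ} {s : S} {a : A} {c : ℝ}
    (h : ∀ s', M.p s a s' ≠ 0 → V s' - V' s' ≤ c) :
    M.backup V s a - M.backup V' s a ≤ M.γ * c := by
  rw [backup_sub_backup]
  exact mul_le_mul_of_nonneg_left (dotProduct_le_of_mem_stdSimplex (M.hp s a) h) M.hγ.1.le

lemma le_backup_sub_backup {V V' : S → ℝ} {s : S} {a : A} {c : ℝ}
    (h : ∀ s', M.p s a s' ≠ 0 → c ≤ V s' - V' s') :
    M.γ * c ≤ M.backup V s a - M.backup V' s a := by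
  rw [backup_sub_backup]
  exact mul_le_mul_of_nonneg_left (le_dotProduct_of_mem_stdSimplex (M.hp s a) h) M.hγ.1.le

lemma eq_of_backup_eq_of_le {V V' : S → ℝ} {s s' : S} {a : A} (hle : ∀ s', V s' ≤ V' s')
    (h : M.backup V s a = M.backup V' s a) (hs' : M.p s a s' ≠ 0) : V s' = V' s' := by
  rw [← sub_eq_zero, backup_sub_backup, mul_eq_zero] at h
  refine eq_of_dotProduct_eq_of_le (M.hp s a).1 hle ?_ hs'
  rw [← sub_eq_zero, ← dotProduct_sub]
  exact h.resolve_left M.hγ.1.ne'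

lemma sub_le_of_eq_backup {Q Q' : S → A → ℝ} {V V' : S → ℝ} {c : ℝ}
    (hQ : Q = M.backup V) (hQ' : Q' = M.backup V')
    (h : ∀ m, (∀ s a, m ≤ Q' s a - Q s a) → ∀ s a s', M.p s a s' ≠ 0 → m - c ≤ V' s' - V s')
    (s : S) (a : A) : Q s a - M.γ * c / (1 - M.γ) ≤ Q' s a := by
  have := neg_div_le_of_lowerBound_contracts (Δ := fun x : S × A => Q' x.1 x.2 - Q x.1 x.2)
    M.hγ.2 (fun m hm x => by
      subst hQ hQ'
      exact le_backup_sub_backup (h m (fun s a => hm (s, a)) x.1 x.2)) (s, a)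
  linarith

lemma fixedPoint_bellmanPol_le_fixedPoint_bellmanOpt {π Q Qstar : S → A → ℝ}
    (hπ : ∀ s, π s ∈ stdSimplex ℝ A) (hQ : bellmanPol M π Q = Q)
    (hQstar : bellmanOpt M Qstar = Qstar) (s : S) (a : A) : Q s a ≤ Qstar s a := by
  have := sub_le_of_eq_backup (c := 0) (bellmanPol_eq_backup M π Q ▸ hQ).symm
    (bellmanOpt_eq_backup M Qstar ▸ hQstar).symm (fun m hm _ _ s' _ => by
      have hgap : m ≤ π s' ⬝ᵥ Qstar s' - π s' ⬝ᵥ Q s' := by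
        rw [← dotProduct_sub]
        exact le_dotProduct_of_mem_stdSimplex (hπ s') fun a _ => hm s' a
      have := dotProduct_le_iSup_of_mem_stdSimplex (f := Qstar s') (hπ s')
      change m - 0 ≤ (⨆ a, Qstar s' a) - π s' ⬝ᵥ Q s'
      linarith) s a
  simpa using this

lemma sub_le_fixedPoint_bellmanPol {π π' Q Q' : S → A → ℝ} {c : ℝ}
    (hπ' : ∀ s, π' s ∈ stdSimplex ℝ A) (hQ : bellmanPol M π Q = Q) (hQ' : bellmanPol M π' Q' = Q')
    (h : ∀ s a s', M.p s a s' ≠ 0 → π s' ⬝ᵥ Q s' - c ≤ π' s' ⬝ᵥ Q s') (s : S) (a : A) :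
    Q s a - M.γ * c / (1 - M.γ) ≤ Q' s a :=
  sub_le_of_eq_backup (bellmanPol_eq_backup M π Q ▸ hQ).symm
    (bellmanPol_eq_backup M π' Q' ▸ hQ').symm (fun m hm s a s' hs' => by
      have hgap : m ≤ π' s' ⬝ᵥ Q' s' - π' s' ⬝ᵥ Q s' := by
        rw [← dotProduct_sub]
        exact le_dotProduct_of_mem_stdSimplex (hπ' s') fun a _ => hm s' a
      change m - c ≤ π' s' ⬝ᵥ Q' s' - π s' ⬝ᵥ Q s'
      linarith [h s a s' hs']) s a

lemma isSmoothedGreedy_of_smoothedPol_eq_smoothedOpt {ν : (A → ℝ) → ℝ} {η : ℝ}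
    {π Q : S → A → ℝ} (hν : ContinuousOn ν (stdSimplex ℝ A)) (hπ : ∀ s, π s ∈ stdSimplex ℝ A)
    (h : smoothedPol M ν η π Q = smoothedOpt M ν η Q) {s s' : S} {a : A}
    (hs' : M.p s a s' ≠ 0) : IsSmoothedGreedy ν η (Q s') (π s') := by
  have hbdd : ∀ s', BddAbove (Set.range fun μ : stdSimplex ℝ A => μ.1 ⬝ᵥ Q s' + η * ν μ.1) :=
    fun s' => by
      have hcont : ContinuousOn (fun μ : A → ℝ => μ ⬝ᵥ Q s' + η * ν μ) (stdSimplex ℝ A) :=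
        (continuous_id.dotProduct continuous_const).continuousOn.add (continuousOn_const.mul hν)
      have := (isCompact_stdSimplex ℝ A).bddAbove_image hcont
      rwa [Set.image_eq_range] at this
  have hmax := eq_of_backup_eq_of_le (M := M) (s := s) (a := a)
    (fun s' => le_ciSup (hbdd s') ⟨π s', hπ s'⟩) (congrFun (congrFun h s) a) hs'
  exact fun μ hμ => (le_ciSup (hbdd s') ⟨μ, hμ⟩).trans_eq hmax.symm

end MDP

namespace ApproxDSPISeq

variable {M : MDP S A} {ν : (A → ℝ) → ℝ} {τ ε b : ℝ} {β : ℕ → ℝ}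

lemma eps_nonneg (D : ApproxDSPISeq M ν τ β ε) : 0 ≤ ε :=
  (supNormQ_nonneg _).trans (D.hW 0)

variable (D : ApproxDSPISeq M ν τ β ε)

lemma Wbar_succ_apply (k : ℕ) (s : S) (a : A) :
    D.Wbar (k + 1) s a = (1 - β k) * D.Wbar k s a + β k * D.W k s a := by
  simp [D.hWbarSucc k]

lemma abs_W_sub_Qpi_le (k : ℕ) (s : S) (a : A) : |D.W k s a - D.Qpi k s a| ≤ ε :=
  (abs_le_supNormQ (D.W k - D.Qpi k) s a).trans (D.hW k)

lemma isSmoothedGreedy (hν : ContinuousOn ν (stdSimplex ℝ A)) (k : ℕ) {s s' : S} {a : A}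
    (hs' : M.p s a s' ≠ 0) :
    IsSmoothedGreedy ν (eta τ β k) (D.Wbar (k + 1) s') (D.pol (k + 1) s') :=
  M.isSmoothedGreedy_of_smoothedPol_eq_smoothedOpt hν (D.hpol (k + 1)) (D.hgreedy k) hs'

lemma pol_dotProduct_W_le_succ (hν : ContinuousOn ν (stdSimplex ℝ A)) (hτ : 0 ≤ τ)
    (hb : b ∈ Set.Ioc (0 : ℝ) 1) (hβ0 : β 0 = 1) (hβ : ∀ k ≥ 1, β k = b) (k : ℕ) {s s' : S}
    {a : A} (hs' : M.p s a s' ≠ 0) : D.pol k s' ⬝ᵥ D.W k s' ≤ D.pol (k + 1) s' ⬝ᵥ D.W k s' := by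
  cases k with
  | zero =>
    have hgreedy := D.isSmoothedGreedy hν 0 hs'
    have hWbar : D.Wbar 1 s' = D.W 0 s' := by
      funext a'
      simp [D.Wbar_succ_apply, hβ0]
    rw [hWbar, show eta τ β 0 = τ by simp [eta]] at hgreedy
    exact hgreedy.dotProduct_le_of_nu_le hτ (D.hpol 0 s') (D.hpol0 s' _ (D.hpol 1 s'))
  | succ k =>
    have hgreedy := D.isSmoothedGreedy hν (k + 1) hs'
    have hWbar : D.Wbar (k + 1 + 1) s' = (1 - b) • D.Wbar (k + 1) s' + b • D.W (k + 1) s' := by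
      rw [D.hWbarSucc, hβ (k + 1) k.succ_pos]
      rfl
    have heta : eta τ β (k + 1) = (1 - b) * eta τ β k := by
      rw [eta_eq_mul_pow hβ, eta_eq_mul_pow hβ]
      ring
    rw [hWbar, heta] at hgreedy
    exact (D.isSmoothedGreedy hν k hs').dotProduct_le_of_average hb.1 hb.2 hgreedy
      (D.hpol _ s') (D.hpol _ s')

lemma Qpi_sub_le_Qpi_succ (hν : ContinuousOn ν (stdSimplex ℝ A)) (hτ : 0 ≤ τ)
    (hb : b ∈ Set.Ioc (0 : ℝ) 1) (hβ0 : β 0 = 1) (hβ : ∀ k ≥ 1, β k = b) (k : ℕ) (s : S)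
    (a : A) : D.Qpi k s a - M.γ * (2 * ε) / (1 - M.γ) ≤ D.Qpi (k + 1) s a :=
  M.sub_le_fixedPoint_bellmanPol (D.hpol (k + 1)) (D.hQpi k) (D.hQpi (k + 1)) (fun _ _ s' hs' => by
    have hcur := abs_dotProduct_sub_le_of_mem_stdSimplex (D.hpol k s') (D.abs_W_sub_Qpi_le k s')
    have hnext :=
      abs_dotProduct_sub_le_of_mem_stdSimplex (D.hpol (k + 1) s') (D.abs_W_sub_Qpi_le k s')
    have := D.pol_dotProduct_W_le_succ hν hτ hb hβ0 hβ k hs'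
    rw [abs_le] at hcur hnext
    linarith) s a

lemma Wbar_le_Qpi_add (hν : ContinuousOn ν (stdSimplex ℝ A)) (hτ : 0 ≤ τ)
    (hb : b ∈ Set.Ioc (0 : ℝ) 1) (hβ0 : β 0 = 1) (hβ : ∀ k ≥ 1, β k = b) {k : ℕ} (hk : 1 ≤ k)
    (s : S) (a : A) :
    D.Wbar k s a ≤ D.Qpi k s a + (1 + M.γ) / (1 - M.γ) * ε * ∑ i ∈ range k, (1 - b) ^ i := by
  have hε := D.eps_nonneg
  have hstep : (1 + M.γ) / (1 - M.γ) * ε = ε + M.γ * (2 * ε) / (1 - M.γ) := by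
    field_simp [(sub_pos.2 M.hγ.2).ne']
    ring
  induction k, hk using Nat.le_induction generalizing s a with
  | base =>
    have hW := (abs_le.1 (D.abs_W_sub_Qpi_le 0 s a)).2
    have := D.Qpi_sub_le_Qpi_succ hν hτ hb hβ0 hβ 0 s a
    rw [D.Wbar_succ_apply, hβ0, range_one, sum_singleton, pow_zero, mul_one, hstep]
    linarith
  | succ k hk ih =>
    have hW := (abs_le.1 (D.abs_W_sub_Qpi_le k s a)).2
    have := D.Qpi_sub_le_Qpi_succ hν hτ hb hβ0 hβ k s a
    have hrec := mul_le_mul_of_nonneg_left (ih s a) (sub_nonneg.2 hb.2)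
    rw [D.Wbar_succ_apply, hβ k hk, geom_sum_succ]
    nlinarith [hb.1, hb.2]

lemma Qstar_sub_Qpi_succ_le [Nonempty A] (hν : ContinuousOn ν (stdSimplex ℝ A))
    (hν₀ : ∀ μ ∈ stdSimplex ℝ A, 0 ≤ ν μ) (hτ : 0 ≤ τ) (hb : b ∈ Set.Ioc (0 : ℝ) 1)
    (hβ0 : β 0 = 1) (hβ : ∀ k ≥ 1, β k = b) {Qstar : S → A → ℝ}
    (hQstar : bellmanOpt M Qstar = Qstar) (k : ℕ) (s : S) (a : A) :
    Qstar s a - D.Qpi (k + 1) s a ≤ M.γ * (supNormQ (Qstar - D.Wbar (k + 1))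
      + nuMax ν * eta τ β k + (1 + M.γ) / (1 - M.γ) * ε * ∑ i ∈ range (k + 1), (1 - b) ^ i) := by
  have hopt : Qstar s a = M.backup (Vstar Qstar) s a := (congrFun (congrFun hQstar s) a).symm
  have hpol : D.Qpi (k + 1) s a = M.backup (valueOf (D.pol (k + 1)) (D.Qpi (k + 1))) s a :=
    (congrFun (congrFun (D.hQpi (k + 1)) s) a).symm
  rw [hopt, hpol]
  refine M.backup_sub_backup_le fun s' hs' => ?_
  have hVstar : Vstar Qstar s' ≤ (⨆ a', D.Wbar (k + 1) s' a')
      + supNormQ (Qstar - D.Wbar (k + 1)) := ciSup_le fun a' => by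
    have := (abs_le.1 (abs_le_supNormQ (Qstar - D.Wbar (k + 1)) s' a')).2
    have := le_ciSup (Set.finite_range (D.Wbar (k + 1) s')).bddAbove a'
    simp only [Pi.sub_apply] at *
    linarith
  have hgreedy := (D.isSmoothedGreedy hν k hs').iSup_le (eta_nonneg hτ hb.2 hβ k) hν₀
    (le_nuMax hν (D.hpol (k + 1) s'))
  have hbias := dotProduct_le_of_mem_stdSimplex (D.hpol (k + 1) s')
    (f := D.Wbar (k + 1) s' - D.Qpi (k + 1) s') fun a' _ =>
      sub_le_iff_le_add'.2 (D.Wbar_le_Qpi_add hν hτ hb hβ0 hβ k.succ_pos s' a')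
  rw [dotProduct_sub] at hbias
  change Vstar Qstar s' - D.pol (k + 1) s' ⬝ᵥ D.Qpi (k + 1) s' ≤ _
  linarith

end ApproxDSPISeq

end

theorem approx_dspi_almost_contraction_general
    (M : MDP S A)
    (ν : (A → ℝ) → ℝ)
    (hν_cont : ContinuousOn ν (stdSimplex ℝ A))
    (hν_nonneg : ∀ μ ∈ stdSimplex ℝ A, 0 ≤ ν μ)
    (τ : ℝ) (hτ : 0 ≤ τ)
    (ε : ℝ)
    (b : ℝ) (hb : b ∈ Set.Ioc (0 : ℝ) 1)
    (β : ℕ → ℝ) (hβ0 : β 0 = 1) (hβ : ∀ k ≥ 1, β k = b)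
    (D : ApproxDSPISeq M ν τ β ε)
    (Qstar : S → A → ℝ) (hQstar : bellmanOpt M Qstar = Qstar) :
    ∀ k ≥ 1,
      supNormQ (Qstar - D.Wbar (k + 1))
        ≤ (1 - b * (1 - M.γ)) * supNormQ (Qstar - D.Wbar k)
          + b * M.γ * nuMax ν * (τ * (1 - b) ^ (k - 1))
          + b * M.γ * (((1 + M.γ) / (1 - M.γ)) * ε * ∑ i ∈ Finset.range k, (1 - b) ^ i)
          + b * ε := by
  intro k hk
  obtain ⟨n, rfl⟩ := Nat.exists_eq_add_of_le' hk
  rw [Nat.add_sub_cancel, ← eta_eq_mul_pow hβ]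
  refine supNormQ_le fun s a => ?_
  have hN := abs_le.1 (abs_le_supNormQ (Qstar - D.Wbar (n + 1)) s a)
  have hW := abs_le.1 (D.abs_W_sub_Qpi_le (n + 1) s a)
  have hgap := D.Qstar_sub_Qpi_succ_le hν_cont hν_nonneg hτ hb hβ0 hβ hQstar n s a
  have hdom := M.fixedPoint_bellmanPol_le_fixedPoint_bellmanOpt (D.hpol (n + 1)) (D.hQpi (n + 1))
    hQstar s a
  have hη : 0 ≤ nuMax ν * eta τ β n := mul_nonneg (nuMax_nonneg hν_nonneg) (eta_nonneg hτ hb.2 hβ n)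
  have hδ : 0 ≤ (1 + M.γ) / (1 - M.γ) * ε * ∑ i ∈ range (n + 1), (1 - b) ^ i := by
    refine mul_nonneg (mul_nonneg (div_nonneg ?_ (sub_pos.2 M.hγ.2).le) D.eps_nonneg)
      (sum_nonneg fun i _ => pow_nonneg ?_ i)
    · linarith [M.hγ.1]
    · linarith [hb.2]
  have hsplit : (Qstar - D.Wbar (n + 1 + 1)) s a = (1 - b) * (Qstar - D.Wbar (n + 1)) s a
      + b * (Qstar s a - D.Qpi (n + 1) s a) - b * (D.W (n + 1) s a - D.Qpi (n + 1) s a) := by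
    simp only [Pi.sub_apply, D.Wbar_succ_apply, hβ (n + 1) n.succ_pos]
    ring
  rw [hsplit, abs_le]
  obtain ⟨hb₀, hb₁⟩ := hb
  constructor <;> nlinarith

/-- **Almost contractive recursion for approximate DSPI** (Lemma 8). -/
theorem approx_dspi_almost_contraction
    (M : MDP S A)
    (ν : (A → ℝ) → ℝ)
    (hν_cont : ContinuousOn ν (stdSimplex ℝ A))
    (hν_nonneg : ∀ μ ∈ stdSimplex ℝ A, 0 ≤ ν μ)
    (hν_conc : ConcaveOn ℝ (stdSimplex ℝ A) ν)
    (τ : ℝ) (hτ : 0 ≤ τ)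
    (ε : ℝ) (hε : 0 ≤ ε)
    (b : ℝ) (hb : b ∈ Set.Ioc (0 : ℝ) 1)
    (β : ℕ → ℝ) (hβ0 : β 0 = 1) (hβ : ∀ k ≥ 1, β k = b)
    (D : ApproxDSPISeq M ν τ β ε)
    (Qstar : S → A → ℝ) (hQstar : bellmanOpt M Qstar = Qstar) :
    ∀ k ≥ 1,
      supNormQ (Qstar - D.Wbar (k + 1))
        ≤ (1 - b * (1 - M.γ)) * supNormQ (Qstar - D.Wbar k)
          + b * M.γ * nuMax ν * (τ * (1 - b) ^ (k - 1))
          + b * M.γ * (((1 + M.γ) / (1 - M.γ)) * ε * ∑ i ∈ Finset.range k, (1 - b) ^ i)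
          + b * ε :=
  approx_dspi_almost_contraction_general M ν hν_cont hν_nonneg τ hτ ε b hb β hβ0 hβ D Qstar hQstar
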